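/- Let Γ be a boundedly n-acyclic group, n ≥ 1, and let V be a dual normed space (V = B(W,ℝ) for some normed space W) regarded as a trivial Γ-module. Then the bounded cochain complex 0 → V → ℓ∞(Γ, V) → ℓ∞(Γ², V) → ⋯ has vanishing cohomology in all degrees 1 ≤ i ≤ n; i.e., H^i_b(Γ; V) = 0 for 1 ≤ i ≤ n. -/

import Mathlib

set_option synthInstance.maxHeartbeats 1000000
set_option maxHeartbeats 1000000

open scoped ENNReal

universe u v

/-- `ℓ∞(S, V)`: the Banach space of bounded functions `S → V` with the sup norm. -/
noncomputable abbrev ellInfty (S : Type*) (V : Type*) [NormedAddCommGroup V] : Type _ :=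
  lp (fun _ : S => V) ∞

/-- A Banach space `X` is *injective* if for every Banach space `W`, every closed subspace
`V ⊆ W` and every bounded linear map `f : V → X`, there is a bounded linear extension of `f`
to all of `W`. -/
def IsInjectiveBanach (X : Type u) [NormedAddCommGroup X] [NormedSpace ℝ X] : Prop :=
  ∀ (W : Type v) (_ : NormedAddCommGroup W) (_ : NormedSpace ℝ W) (_ : CompleteSpace W)
    (V : Submodule ℝ W), IsClosed (V : Set W) →
      ∀ f : V →L[ℝ] X, ∃ g : W →L[ℝ] X, ∀ v : V, g v = f v
/-- The inhomogeneous coboundary operator of the bounded cochain complex of a group `Γ`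
with trivial coefficients in `V` (raw formula on arbitrary functions):
`δⁿ(f)(γ₁,…,γ_{n+1}) = f(γ₂,…,γ_{n+1}) + Σ_{i=1}^n (−1)^i f(γ₁,…,γᵢγ_{i+1},…,γ_{n+1})
  + (−1)^{n+1} f(γ₁,…,γₙ)` (here written with `0`-indexed tuples). -/
noncomputable def deltaFun (Γ : Type*) [Group Γ] {V : Type*} [AddCommGroup V] [Module ℝ V]
    (n : ℕ) (f : (Fin n → Γ) → V) : (Fin n.succ → Γ) → V :=
  fun γ =>
    f (fun j => γ j.succ)
      + ∑ i : Fin n, ((-1 : ℝ) ^ (i.1 + 1)) •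
          f (fun j => if j.1 < i.1 then γ j.castSucc
              else if j.1 = i.1 then γ j.castSucc * γ j.succ else γ j.succ)
      + ((-1 : ℝ) ^ (n + 1)) • f (fun j => γ j.castSucc)

theorem deltaFun_norm_le (Γ : Type*) [Group Γ] {V : Type*} [NormedAddCommGroup V]
    [NormedSpace ℝ V] (n : ℕ) (f : ellInfty (Fin n → Γ) V) (γ : Fin (n + 1) → Γ) :
    ‖deltaFun Γ n (f : (Fin n → Γ) → V) γ‖ ≤ (n + 2) * ‖f‖ := by
  have hb : ∀ g : Fin n → Γ, ‖(f : (Fin n → Γ) → V) g‖ ≤ ‖f‖ := fun g =>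
    lp.norm_apply_le_norm (by norm_num) f g
  have hf0 : (0 : ℝ) ≤ ‖f‖ := norm_nonneg f
  simp only [deltaFun]
  refine (norm_add₃_le).trans ?_
  have h2 : ‖∑ i : Fin n, ((-1 : ℝ) ^ (i.1 + 1)) •
      (f : (Fin n → Γ) → V) (fun j => if j.1 < i.1 then γ j.castSucc
        else if j.1 = i.1 then γ j.castSucc * γ j.succ else γ j.succ)‖ ≤ n * ‖f‖ := by
    refine (norm_sum_le _ _).trans ?_
    have key : ∀ i : Fin n, ‖((-1 : ℝ) ^ (i.1 + 1)) •
        (f : (Fin n → Γ) → V) (fun j => if j.1 < i.1 then γ j.castSucc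
          else if j.1 = i.1 then γ j.castSucc * γ j.succ else γ j.succ)‖ ≤ ‖f‖ := by
      intro i
      rw [norm_smul]
      have : |(-1 : ℝ) ^ (i.1 + 1)| = 1 := by simp
      rw [Real.norm_eq_abs, this, one_mul]
      exact hb _
    calc ∑ i : Fin n, _ ≤ ∑ _i : Fin n, ‖f‖ := Finset.sum_le_sum (fun i _ => key i)
      _ = n * ‖f‖ := by simp [Finset.sum_const, Finset.card_univ]
  have h3 : ‖((-1 : ℝ) ^ (n + 1)) •
      (f : (Fin n → Γ) → V) (fun j => γ j.castSucc)‖ ≤ ‖f‖ := by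
    rw [norm_smul]; simpa using hb _
  nlinarith [hb (fun j => γ j.succ)]

theorem deltaFun_memℓp (Γ : Type*) [Group Γ] {V : Type*} [NormedAddCommGroup V]
    [NormedSpace ℝ V] (n : ℕ) (f : ellInfty (Fin n → Γ) V) :
    Memℓp (deltaFun Γ n (f : (Fin n → Γ) → V)) ∞ := by
  apply memℓp_infty
  exact ⟨(n + 2) * ‖f‖, by rintro x ⟨γ, rfl⟩; exact deltaFun_norm_le Γ n f γ⟩

/-- The coboundary as a linear map `ℓ∞(Γⁿ, V) → ℓ∞(Γ^{n+1}, V)`. -/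
noncomputable def deltaLin (Γ : Type*) [Group Γ] (V : Type*) [NormedAddCommGroup V]
    [NormedSpace ℝ V] (n : ℕ) :
    ellInfty (Fin n → Γ) V →ₗ[ℝ] ellInfty (Fin (n + 1) → Γ) V where
  toFun f := ⟨deltaFun Γ n (f : (Fin n → Γ) → V), deltaFun_memℓp Γ n f⟩
  map_add' f g := by
    apply lp.ext
    funext γ
    show deltaFun Γ n (⇑(f + g)) γ = deltaFun Γ n ⇑f γ + deltaFun Γ n ⇑g γ
    simp only [deltaFun, lp.coeFn_add, Pi.add_apply, smul_add, Finset.sum_add_distrib]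
    abel
  map_smul' c f := by
    apply lp.ext
    funext γ
    simp [deltaFun, smul_comm c, Finset.smul_sum, smul_add]

/-- The coboundary as a bounded linear operator `δⁿ : ℓ∞(Γⁿ, V) → ℓ∞(Γ^{n+1}, V)`.
(For `n = 0` this is the map out of `ℓ∞(Γ⁰, V) ≅ V`, which is the zero map `δ⁰`.) -/
noncomputable def deltaL (Γ : Type*) [Group Γ] (V : Type*) [NormedAddCommGroup V]
    [NormedSpace ℝ V] (n : ℕ) :
    ellInfty (Fin n → Γ) V →L[ℝ] ellInfty (Fin (n + 1) → Γ) V :=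
  LinearMap.mkContinuous (deltaLin Γ V n) (n + 2) (by
    intro f
    exact lp.norm_le_of_forall_le (by positivity) (fun γ => deltaFun_norm_le Γ n f γ))

/-- `Γ` is boundedly `n`-acyclic: the bounded cochain complex
`0 → ℝ → ℓ∞(Γ) → ℓ∞(Γ²) → ⋯` with trivial real coefficients is exact in degrees
`1 ≤ i ≤ n`, i.e. `im (δ^{i}) = ker (δ^{i+1})` for all `i` with `i + 1 ≤ n`. -/
def BoundedlyAcyclic (Γ : Type*) [Group Γ] (n : ℕ) : Prop :=
  ∀ i : ℕ, i + 1 ≤ n →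
    LinearMap.range (deltaL Γ ℝ i).toLinearMap = LinearMap.ker (deltaL Γ ℝ (i + 1)).toLinearMap


/-!
By Hahn–Banach, applied coordinatewise, `ℓ∞(S, ℝ)` is an injective Banach space. Bounded
acyclicity then yields, by induction on the degree, bounded linear maps `sᵢ` with `δⁱ sᵢ z = z`
for every real cocycle `z`: `δⁱ sᵢ` is a bounded projection onto the cocycles, so `δⁱ⁺¹` is a
surjection onto the next cocycles with complemented kernel; by the open mapping theorem it has
a bounded right inverse, which extends to all cochains by injectivity of `ℓ∞`.
Transposition identifies `ℓ∞(Γᵏ, B(W, ℝ))` with `B(W, ℓ∞(Γᵏ, ℝ))` and turns the coboundary into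
postcomposition with the real one, so composing with `sᵢ` produces primitives of cocycles.
-/

theorem ContinuousLinearMap.HasRightInverse.of_surjective_of_closedComplemented_ker
    {𝕜 E F : Type*} [NontriviallyNormedField 𝕜]
    [NormedAddCommGroup E] [NormedSpace 𝕜 E] [CompleteSpace E]
    [NormedAddCommGroup F] [NormedSpace 𝕜 F] [CompleteSpace F] {f : E →L[𝕜] F}
    (hf : Function.Surjective f) (hker : f.ker.ClosedComplemented) :
    f.HasRightInverse := by
  obtain ⟨q, hq, hcompl⟩ := hker.exists_isClosed_isCompl
  have : CompleteSpace q := hq.completeSpace_coe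
  have hinj : (f ∘L q.subtypeL).ker = ⊥ := by
    simpa [LinearMap.ker_comp, ← Submodule.disjoint_iff_comap_eq_bot] using hcompl.symm.disjoint
  have hsurj : (f ∘L q.subtypeL).range = ⊤ := by
    rw [ContinuousLinearMap.toLinearMap_comp, LinearMap.range_comp,
      Submodule.toLinearMap_subtypeL, Submodule.range_subtype,
      LinearMap.map_eq_top_iff (LinearMap.range_eq_top.2 hf), hcompl.symm.sup_eq_top]
  let e := ContinuousLinearEquiv.ofBijective (f ∘L q.subtypeL) hinj hsurj
  exact ⟨q.subtypeL ∘L (e.symm : F →L[𝕜] q), fun y => e.apply_symm_apply y⟩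

theorem exists_section_of_exact {A D : Type*} {B : Type u} {C : Type v}
    [NormedAddCommGroup A] [NormedSpace ℝ A]
    [NormedAddCommGroup B] [NormedSpace ℝ B] [CompleteSpace B]
    [NormedAddCommGroup C] [NormedSpace ℝ C] [CompleteSpace C]
    [NormedAddCommGroup D] [NormedSpace ℝ D] (hB : IsInjectiveBanach.{u, v} B)
    {d₀ : A →L[ℝ] B} {d₁ : B →L[ℝ] C} {d₂ : C →L[ℝ] D}
    (h₀ : d₁ ∘L d₀ = 0) (h₁ : d₁.range = d₂.ker)
    {s₀ : B →L[ℝ] A} (hs₀ : ∀ z, d₁ z = 0 → d₀ (s₀ z) = z) :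
    ∃ s₁ : C →L[ℝ] B, ∀ z, d₂ z = 0 → d₁ (s₁ z) = z := by
  have hd₁ : ∀ x, d₁ x ∈ d₂.ker := fun x => h₁ ▸ LinearMap.mem_range_self _ x
  let D₁ : B →L[ℝ] d₂.ker := d₁.codRestrict _ hd₁
  have hcompl : D₁.ker.ClosedComplemented :=
    ⟨(d₀ ∘L s₀).codRestrict _ fun x => Subtype.ext congr($h₀ (s₀ x)),
      fun z => Subtype.ext (hs₀ z congr($(LinearMap.mem_ker.1 z.2).1))⟩
  obtain ⟨T, hT⟩ : D₁.HasRightInverse := by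
    refine .of_surjective_of_closedComplemented_ker (fun z => ?_) hcompl
    obtain ⟨x, hx⟩ : (z : C) ∈ d₁.range := h₁.symm ▸ z.2
    exact ⟨x, Subtype.ext hx⟩
  obtain ⟨s₁, hs₁⟩ := hB C inferInstance inferInstance inferInstance d₂.ker d₂.isClosed_ker T
  exact ⟨s₁, fun z hz => (hs₁ ⟨z, hz⟩).symm ▸ congr($(hT ⟨z, hz⟩).1)⟩

namespace ellInfty

variable {S X V : Type*} [NormedAddCommGroup X] [NormedSpace ℝ X]
  [NormedAddCommGroup V] [NormedSpace ℝ V]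

theorem norm_apply_apply_le (f : ellInfty S (X →L[ℝ] V)) (s : S) (x : X) :
    ‖(f : S → X →L[ℝ] V) s x‖ ≤ ‖f‖ * ‖x‖ :=
  ((f s).le_opNorm x).trans (by gcongr; exact lp.norm_apply_le_norm ENNReal.top_ne_zero f s)

noncomputable def flip (f : ellInfty S (X →L[ℝ] V)) : X →L[ℝ] ellInfty S V :=
  LinearMap.mkContinuous
    { toFun := fun x => ⟨fun s => (f : S → X →L[ℝ] V) s x,
        memℓp_infty ⟨‖f‖ * ‖x‖, by rintro _ ⟨s, rfl⟩; exact norm_apply_apply_le f s x⟩⟩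
      map_add' := fun x y => by ext s; exact map_add _ x y
      map_smul' := fun c x => by ext s; exact map_smul _ c x }
    ‖f‖ fun x => lp.norm_le_of_forall_le (by positivity) fun s => norm_apply_apply_le f s x

noncomputable def unflip (G : X →L[ℝ] ellInfty S V) : ellInfty S (X →L[ℝ] V) :=
  ⟨fun s => lp.evalCLM ℝ (fun _ => V) ∞ s ∘L G,
    memℓp_infty ⟨‖G‖, by
      rintro _ ⟨s, rfl⟩
      refine ContinuousLinearMap.opNorm_le_bound _ (norm_nonneg G) fun x => ?_
      exact (lp.norm_apply_le_norm ENNReal.top_ne_zero (G x) s).trans (G.le_opNorm x)⟩⟩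

noncomputable def flipEquiv : ellInfty S (X →L[ℝ] V) ≃ₗ[ℝ] (X →L[ℝ] ellInfty S V) where
  toFun := flip
  invFun := unflip
  map_add' f g := by ext x s; rfl
  map_smul' c f := by ext x s; rfl
  left_inv f := by ext s x; rfl
  right_inv G := by ext x s; rfl

@[simp]
theorem flipEquiv_apply_apply (f : ellInfty S (X →L[ℝ] V)) (x : X) (s : S) :
    (flipEquiv f x : S → V) s = (f : S → X →L[ℝ] V) s x :=
  rfl

end ellInfty

theorem isInjectiveBanach_ellInfty (S : Type u) : IsInjectiveBanach.{u, v} (ellInfty S ℝ) := by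
  intro W _ _ _ V _ φ
  have extend_coord : ∀ s : S,
      ∃ g : W →L[ℝ] ℝ, (∀ v : V, g v = (φ v : S → ℝ) s) ∧ ‖g‖ ≤ ‖φ‖ := by
    intro s
    obtain ⟨g, hg, hnorm⟩ :=
      exists_extension_norm_eq V (lp.evalCLM ℝ (fun _ : S => ℝ) ∞ s ∘L φ)
    refine ⟨g, hg, hnorm ▸ ContinuousLinearMap.opNorm_le_bound _ (norm_nonneg φ) fun v => ?_⟩
    exact (lp.norm_apply_le_norm ENNReal.top_ne_zero (φ v) s).trans (φ.le_opNorm v)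
  choose g hg hgφ using extend_coord
  let gℓ : ellInfty S (W →L[ℝ] ℝ) := ⟨g, memℓp_infty ⟨‖φ‖, by rintro _ ⟨s, rfl⟩; exact hgφ s⟩⟩
  exact ⟨ellInfty.flipEquiv gℓ, fun v => lp.ext (funext fun s => hg s v)⟩

@[simp]
theorem coe_deltaL (Γ : Type*) [Group Γ] (V : Type*) [NormedAddCommGroup V] [NormedSpace ℝ V]
    (n : ℕ) (f : ellInfty (Fin n → Γ) V) :
    (deltaL Γ V n f : (Fin (n + 1) → Γ) → V) = deltaFun Γ n (f : (Fin n → Γ) → V) :=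
  rfl

theorem deltaL_zero (Γ : Type*) [Group Γ] (V : Type*) [NormedAddCommGroup V] [NormedSpace ℝ V] :
    deltaL Γ V 0 = 0 := by
  ext f γ
  simp [deltaFun, Subsingleton.elim (fun j : Fin 0 => γ j.succ) (fun j => γ j.castSucc)]

theorem ellInfty.flipEquiv_deltaL (Γ : Type*) [Group Γ] {X V : Type*}
    [NormedAddCommGroup X] [NormedSpace ℝ X] [NormedAddCommGroup V] [NormedSpace ℝ V]
    (n : ℕ) (f : ellInfty (Fin n → Γ) (X →L[ℝ] V)) :
    ellInfty.flipEquiv (deltaL Γ (X →L[ℝ] V) n f) = deltaL Γ V n ∘L ellInfty.flipEquiv f := by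
  ext x γ
  simp [deltaFun]

namespace BoundedlyAcyclic

variable {Γ : Type u} [Group Γ] {n : ℕ}

theorem deltaL_comp_deltaL (h : BoundedlyAcyclic Γ n) {i : ℕ} (hi : i + 1 ≤ n) :
    deltaL Γ ℝ (i + 1) ∘L deltaL Γ ℝ i = 0 :=
  ContinuousLinearMap.coe_injective (LinearMap.range_le_ker_iff.1 (h i hi).le)

theorem exists_section (h : BoundedlyAcyclic Γ n) {i : ℕ} (hi : i + 1 ≤ n) :
    ∃ s : ellInfty (Fin (i + 1) → Γ) ℝ →L[ℝ] ellInfty (Fin i → Γ) ℝ,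
      ∀ z, deltaL Γ ℝ (i + 1) z = 0 → deltaL Γ ℝ i (s z) = z := by
  induction i with
  | zero =>
    refine ⟨0, fun z hz => ?_⟩
    obtain ⟨x, rfl⟩ : z ∈ (deltaL Γ ℝ 0).range := (h 0 hi).symm ▸ hz
    simp [deltaL_zero]
  | succ i ih =>
    obtain ⟨s, hs⟩ := ih (by omega)
    exact exists_section_of_exact (isInjectiveBanach_ellInfty _)
      (h.deltaL_comp_deltaL (by omega)) (h (i + 1) hi) hs

end BoundedlyAcyclic

theorem bounded_acyclicity_dual_coefficients_general (Γ : Type*) [Group Γ] (n : ℕ)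
    (h : BoundedlyAcyclic Γ n) (W : Type*) [NormedAddCommGroup W] [NormedSpace ℝ W] :
    ∀ i : ℕ, i + 1 ≤ n →
      LinearMap.range (deltaL Γ (W →L[ℝ] ℝ) i).toLinearMap =
        LinearMap.ker (deltaL Γ (W →L[ℝ] ℝ) (i + 1)).toLinearMap := by
  intro i hi
  obtain ⟨s, hs⟩ := h.exists_section hi
  ext f
  simp only [LinearMap.mem_range, LinearMap.mem_ker, ContinuousLinearMap.coe_coe]
  constructor
  · rintro ⟨g, rfl⟩
    rw [← ellInfty.flipEquiv.map_eq_zero_iff, ellInfty.flipEquiv_deltaL,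
      ellInfty.flipEquiv_deltaL, ← ContinuousLinearMap.comp_assoc, h.deltaL_comp_deltaL hi,
      ContinuousLinearMap.zero_comp]
  · intro hf
    have hcocycle : deltaL Γ ℝ (i + 1) ∘L ellInfty.flipEquiv f = 0 := by
      rw [← ellInfty.flipEquiv_deltaL, hf, map_zero]
    refine ⟨ellInfty.flipEquiv.symm (s ∘L ellInfty.flipEquiv f),
      ellInfty.flipEquiv.injective ?_⟩
    ext1 w
    rw [ellInfty.flipEquiv_deltaL, LinearEquiv.apply_symm_apply]
    exact hs _ congr($hcocycle w)

/-- Let `Γ` be a boundedly `n`-acyclic group, `n ≥ 1`, and let `V = B(W,ℝ)` be a dual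
normed space regarded as a trivial `Γ`-module. Then the bounded cochain complex
`0 → V → ℓ∞(Γ, V) → ℓ∞(Γ², V) → ⋯` has vanishing cohomology in all degrees `1 ≤ i ≤ n`:
`H^i_b(Γ; V) = 0` for `1 ≤ i ≤ n`. -/
theorem bounded_acyclicity_dual_coefficients (Γ : Type*) [Group Γ] (n : ℕ) (hn : 1 ≤ n)
    (h : BoundedlyAcyclic Γ n) (W : Type*) [NormedAddCommGroup W] [NormedSpace ℝ W] :
    ∀ i : ℕ, i + 1 ≤ n →
      LinearMap.range (deltaL Γ (W →L[ℝ] ℝ) i).toLinearMap =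
        LinearMap.ker (deltaL Γ (W →L[ℝ] ℝ) (i + 1)).toLinearMap :=
  bounded_acyclicity_dual_coefficients_general Γ n h W
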